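/- arXiv:1402.3610 — 4 statements merged into one kernel-verified Lean document; each statement's English description precedes it below -/
import Mathlib

section
/- For any two welfare functions W' = (𝒯', Q') and W'' = (𝒯'', Q'') with W'(∅) = W''(∅) = 0, and any weight system ω = (λ, Σ): f^{W'}_{GWSV}[ω] = f^{W''}_{GWMC}[ω] (as functions on N × 2^N) if and only if 𝒯' = 𝒯'' and for every T ∈ 𝒯', q'_T = (Σ_{j∈T̄} λ_j) · q''_T. -/
open scoped BigOperators Classical

namespace CostSharing

/-- A welfare sharing game on player set `N`: a finite resource set, a nonempty
finite action set (a collection of subsets of resources) for each player, and a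
local welfare function at each resource. -/
structure Game (N : Type) [Fintype N] [DecidableEq N] where
  R : Type
  [finR : Fintype R]
  [decR : DecidableEq R]
  act : N → Finset (Finset R)
  act_nonempty : ∀ i, (act i).Nonempty
  Wr : R → Finset N → ℝ

attribute [instance] Game.finR Game.decR

variable {N : Type} [Fintype N] [DecidableEq N]

/-- `{a}_r`: the set of players choosing resource `r` in profile `a`. -/
def playersAt {G : Game N} (a : N → Finset G.R) (r : G.R) : Finset N :=
  Finset.univ.filter fun i => r ∈ a i

/-- Player `i`'s utility, where `fD` assigns to each local welfare function its
local distribution rule (so resources with identical welfare functions have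
identical distribution rules). -/
noncomputable def utility (G : Game N) (fD : (Finset N → ℝ) → N → Finset N → ℝ)
    (a : N → Finset G.R) (i : N) : ℝ :=
  ∑ r ∈ a i, fD (G.Wr r) i (playersAt a r)

/-- Pure Nash equilibrium. -/
def IsPNE (G : Game N) (fD : (Finset N → ℝ) → N → Finset N → ℝ)
    (a : N → Finset G.R) : Prop :=
  (∀ i, a i ∈ G.act i) ∧
    ∀ i : N, ∀ b ∈ G.act i,
      utility G fD (Function.update a i b) i ≤ utility G fD a i

/-- Every game in the class `G(N, f^𝕎, 𝕎)` possesses a pure Nash equilibrium. -/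
def GuaranteesPNE (𝕎 : Set (Finset N → ℝ))
    (fD : (Finset N → ℝ) → N → Finset N → ℝ) : Prop :=
  ∀ G : Game N, (∀ r : G.R, G.Wr r ∈ 𝕎) → ∃ a, IsPNE G fD a

/-- Every game in the single-welfare-function class `G(N, f, W)` possesses a
pure Nash equilibrium. -/
def GuaranteesPNE1 (W : Finset N → ℝ) (f : N → Finset N → ℝ) : Prop :=
  ∀ G : Game N, (∀ r : G.R, G.Wr r = W) → ∃ a, IsPNE G (fun _ => f) a

/-- A distribution rule allocates nothing to absent players. -/
def DistRule (f : N → Finset N → ℝ) : Prop :=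
  ∀ (i : N) (S : Finset N), i ∉ S → f i S = 0

/-- Budget balance: `∑_{i∈S} f(i,S) = W(S)`. -/
def BudgetBalanced (W : Finset N → ℝ) (f : N → Finset N → ℝ) : Prop :=
  ∀ S : Finset N, ∑ i ∈ S, f i S = W S

/-- The inclusion (unanimity) welfare function `W^T`. -/
def unanimity (T S : Finset N) : ℝ := if T ⊆ S then 1 else 0

/-- The basis coefficient `q^W_T` of `W` on the unanimity basis (Möbius inversion). -/
def coeff (W : Finset N → ℝ) (T : Finset N) : ℝ :=
  ∑ R ∈ T.powerset, (-1 : ℝ) ^ (T.card - R.card) * W R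

/-- The support `𝒯^W` of the basis representation of `W`. -/
noncomputable def supp (W : Finset N → ℝ) : Finset (Finset N) :=
  Finset.univ.filter fun T => coeff W T ≠ 0

/-- `𝒯^W(S)`: the contributing coalitions within `S`. -/
noncomputable def suppIn (W : Finset N → ℝ) (S : Finset N) : Finset (Finset N) :=
  (supp W).filter (· ⊆ S)

/-- `N^W(S)`: the contributing players within `S`. -/
noncomputable def contributors (W : Finset N → ℝ) (S : Finset N) : Finset N :=
  (suppIn W S).biUnion id

/-- A weight system `ω = (λ, Σ)`: strictly positive player weights together with
an ordered partition of `N`. -/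
structure WeightSystem (N : Type) [Fintype N] [DecidableEq N] where
  lam : N → ℝ
  lam_pos : ∀ i, 0 < lam i
  m : ℕ
  part : Fin m → Finset N
  part_nonempty : ∀ k, (part k).Nonempty
  part_disjoint : ∀ k l, k ≠ l → Disjoint (part k) (part l)
  part_covers : ∀ i : N, ∃ k, i ∈ part k

/-- The index of the block of the ordered partition containing player `i`. -/
noncomputable def WeightSystem.idx (ω : WeightSystem N) (i : N) : Fin ω.m :=
  (ω.part_covers i).choose

/-- `T̄ = T ∩ S_k` where `k = min {j : S_j ∩ T ≠ ∅}`. -/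
noncomputable def WeightSystem.bar (ω : WeightSystem N) (T : Finset N) : Finset N :=
  T.filter fun i => ∀ j ∈ T, ω.idx i ≤ ω.idx j

/-- The generalized weighted Shapley value basis rule `f^T_{GWSV}[ω]`. -/
noncomputable def fGWSVbasis (ω : WeightSystem N) (T : Finset N) (i : N)
    (S : Finset N) : ℝ :=
  if i ∈ ω.bar T ∧ T ⊆ S then ω.lam i / ∑ j ∈ ω.bar T, ω.lam j else 0

/-- The generalized weighted marginal contribution basis rule `f^T_{GWMC}[ω]`. -/
noncomputable def fGWMCbasis (ω : WeightSystem N) (T : Finset N) (i : N)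
    (S : Finset N) : ℝ :=
  if i ∈ ω.bar T ∧ T ⊆ S then ω.lam i else 0

/-- The generalized weighted Shapley value distribution rule `f^{W'}_{GWSV}[ω]`. -/
noncomputable def fGWSV (ω : WeightSystem N) (W' : Finset N → ℝ) (i : N)
    (S : Finset N) : ℝ :=
  ∑ T ∈ supp W', coeff W' T * fGWSVbasis ω T i S

/-- The generalized weighted marginal contribution distribution rule
`f^{W''}_{GWMC}[ω]`. -/
noncomputable def fGWMC (ω : WeightSystem N) (W'' : Finset N → ℝ) (i : N)
    (S : Finset N) : ℝ :=
  ∑ T ∈ supp W'', coeff W'' T * fGWMCbasis ω T i S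

/-- The recursively defined basis distribution rules `f^T` of a distribution
rule `f` for `W` (recursion along the min-partition of `(𝒯^W, ⊆)`). -/
noncomputable def basisRule (W : Finset N → ℝ) (f : N → Finset N → ℝ)
    (T : Finset N) (i : N) (S : Finset N) : ℝ :=
  if T ⊆ S then
    (1 / coeff W T) *
      (f i T - ∑ T' ∈ ((suppIn W T).erase T).attach,
        coeff W T'.1 * basisRule W f T'.1 i S)
  else 0
termination_by T.card
decreasing_by
  have h := T'.2
  simp only [Finset.mem_erase, suppIn, Finset.mem_filter] at h
  exact Finset.card_lt_card (Finset.ssubset_iff_subset_ne.mpr ⟨h.2.2, h.1⟩)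


/-!
Both rules are linear combinations of the GWMC basis rules `f^T_{GWMC}[ω]`, the GWSV rule
with coefficients `q'_T / ∑_{j∈T̄} λ_j`. These basis rules are linearly independent over the
nonempty coalitions, being triangular with respect to inclusion, so the two rules agree iff
the coefficients agree on nonempty `T`. The empty coalition carries no basis rule at all,
which is why `W'(∅) = W''(∅) = 0` is needed to match the supports.
-/

namespace WeightSystem

variable (ω : WeightSystem N)

noncomputable def barWeight (T : Finset N) : ℝ :=
  ∑ j ∈ ω.bar T, ω.lam j

@[simp]
lemma bar_empty : ω.bar ∅ = ∅ := by
  simp [bar]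

lemma bar_nonempty {T : Finset N} (hT : T.Nonempty) : (ω.bar T).Nonempty := by
  obtain ⟨i, hi, hmin⟩ := T.exists_min_image ω.idx hT
  exact ⟨i, Finset.mem_filter.mpr ⟨hi, hmin⟩⟩

lemma barWeight_pos {T : Finset N} (hT : T.Nonempty) : 0 < ω.barWeight T :=
  Finset.sum_pos (fun j _ => ω.lam_pos j) (ω.bar_nonempty hT)

end WeightSystem

section BasisRules

variable (ω : WeightSystem N)

@[simp]
lemma fGWMCbasis_empty (i : N) (S : Finset N) : fGWMCbasis ω ∅ i S = 0 := by
  simp [fGWMCbasis]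

lemma fGWMCbasis_of_not_subset {T S : Finset N} (h : ¬T ⊆ S) (i : N) :
    fGWMCbasis ω T i S = 0 := by
  simp [fGWMCbasis, h]

lemma fGWMCbasis_self {T : Finset N} {i : N} (hi : i ∈ ω.bar T) :
    fGWMCbasis ω T i T = ω.lam i := by
  simp [fGWMCbasis, hi]

lemma fGWSVbasis_eq_div (T : Finset N) (i : N) (S : Finset N) :
    fGWSVbasis ω T i S = fGWMCbasis ω T i S / ω.barWeight T := by
  unfold fGWSVbasis fGWMCbasis WeightSystem.barWeight
  split_ifs <;> simp

end BasisRules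

section GWMCRule

variable (ω : WeightSystem N)

noncomputable def gwmcRule (c : Finset N → ℝ) (i : N) (S : Finset N) : ℝ :=
  ∑ T, c T * fGWMCbasis ω T i S

lemma gwmcRule_sub (c d : Finset N → ℝ) :
    gwmcRule ω (c - d) = gwmcRule ω c - gwmcRule ω d := by
  funext i S
  simp only [gwmcRule, Pi.sub_apply, sub_mul, Finset.sum_sub_distrib]

/-- Triangularity: evaluated at `(i, T)` with `i ∈ T̄`, only the basis rules of subsets of `T`
contribute, and by induction only that of `T` itself. -/
lemma eq_zero_of_gwmcRule_eq_zero {c : Finset N → ℝ} (h : gwmcRule ω c = 0) :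
    ∀ T : Finset N, T.Nonempty → c T = 0 := by
  intro T
  induction T using Finset.strongInduction with
  | _ T ih =>
    intro hT
    obtain ⟨i, hi⟩ := ω.bar_nonempty hT
    have hsum : gwmcRule ω c i T = c T * ω.lam i := by
      rw [gwmcRule, Finset.sum_eq_single T]
      · rw [fGWMCbasis_self ω hi]
      · intro T' _ hne
        by_cases hsub : T' ⊆ T
        · rcases T'.eq_empty_or_nonempty with rfl | hT'
          · simp
          · rw [ih T' (Finset.ssubset_iff_subset_ne.mpr ⟨hsub, hne⟩) hT', zero_mul]
        · rw [fGWMCbasis_of_not_subset ω hsub, mul_zero]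
      · exact fun h => absurd (Finset.mem_univ T) h
    have hzero : c T * ω.lam i = 0 := by
      rw [← hsum, h]
      rfl
    exact (mul_eq_zero.mp hzero).resolve_right (ω.lam_pos i).ne'

lemma gwmcRule_eq_iff {c d : Finset N → ℝ} :
    gwmcRule ω c = gwmcRule ω d ↔ ∀ T : Finset N, T.Nonempty → c T = d T := by
  constructor
  · intro h T hT
    have h0 : gwmcRule ω (c - d) = 0 := by rw [gwmcRule_sub, h, sub_self]
    exact sub_eq_zero.mp (eq_zero_of_gwmcRule_eq_zero ω h0 T hT)
  · intro h
    funext i S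
    refine Finset.sum_congr rfl fun T _ => ?_
    rcases T.eq_empty_or_nonempty with rfl | hT
    · simp
    · rw [h T hT]

lemma fGWMC_eq_gwmcRule (W : Finset N → ℝ) : fGWMC ω W = gwmcRule ω (coeff W) := by
  funext i S
  refine Finset.sum_subset (Finset.subset_univ _) fun T _ hT => ?_
  simp only [supp, Finset.mem_filter, Finset.mem_univ, true_and, not_not] at hT
  simp [hT]

lemma fGWSV_eq_gwmcRule (W : Finset N → ℝ) :
    fGWSV ω W = gwmcRule ω fun T => coeff W T / ω.barWeight T := by
  funext i S
  rw [fGWSV, gwmcRule, ← Finset.sum_subset (Finset.subset_univ (supp W))]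
  · refine Finset.sum_congr rfl fun T _ => ?_
    rw [fGWSVbasis_eq_div]
    ring
  · intro T _ hT
    simp only [supp, Finset.mem_filter, Finset.mem_univ, true_and, not_not] at hT
    simp [hT]

end GWMCRule

section Coefficients

variable (ω : WeightSystem N) {W' W'' : Finset N → ℝ}

lemma coeff_div_barWeight_iff (h1 : W' ∅ = 0) (h2 : W'' ∅ = 0) :
    (∀ T : Finset N, T.Nonempty → coeff W' T / ω.barWeight T = coeff W'' T) ↔
      ∀ T, coeff W' T = ω.barWeight T * coeff W'' T := by
  refine forall_congr' fun T => ?_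
  rcases T.eq_empty_or_nonempty with rfl | hT
  · simp [coeff, h1, h2]
  · rw [div_eq_iff (ω.barWeight_pos hT).ne', mul_comm]
    simp [hT]

lemma supp_eq_and_coeff_eq_iff (h2 : W'' ∅ = 0) :
    (supp W' = supp W'' ∧ ∀ T ∈ supp W', coeff W' T = ω.barWeight T * coeff W'' T) ↔
      ∀ T, coeff W' T = ω.barWeight T * coeff W'' T := by
  simp only [supp, Finset.ext_iff, Finset.mem_filter, Finset.mem_univ, true_and]
  constructor
  · rintro ⟨hsupp, hq⟩ T
    by_cases hT : coeff W' T = 0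
    · rw [hT, (not_iff_not.mp (hsupp T)).mp hT, mul_zero]
    · exact hq T hT
  · intro hq
    refine ⟨fun T => ⟨fun hT h0 => hT (by rw [hq T, h0, mul_zero]), fun hT => ?_⟩,
      fun T _ => hq T⟩
    have hne : T.Nonempty :=
      Finset.nonempty_iff_ne_empty.mpr (by rintro rfl; exact hT (by simp [coeff, h2]))
    rw [hq T]
    exact mul_ne_zero (ω.barWeight_pos hne).ne' hT

end Coefficients

/-- **Proposition 2.** For any two welfare functions `W' = (𝒯', Q')` and
`W'' = (𝒯'', Q'')` vanishing on `∅`, and any weight system `ω = (λ, Σ)`: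
`f^{W'}_{GWSV}[ω] = f^{W''}_{GWMC}[ω]` iff `𝒯' = 𝒯''` and
`q'_T = (∑_{j∈T̄} λ_j) · q''_T` for every `T ∈ 𝒯'`. -/
theorem gwsv_gwmc_equiv (N : Type) [Fintype N] [DecidableEq N]
    (ω : WeightSystem N) (W' W'' : Finset N → ℝ)
    (h1 : W' ∅ = 0) (h2 : W'' ∅ = 0) :
    fGWSV ω W' = fGWMC ω W'' ↔
      supp W' = supp W'' ∧
        ∀ T ∈ supp W', coeff W' T = (∑ j ∈ ω.bar T, ω.lam j) * coeff W'' T := by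
  rw [fGWSV_eq_gwmcRule, fGWMC_eq_gwmcRule, gwmcRule_eq_iff,
    coeff_div_barWeight_iff ω h1 h2]
  exact (supp_eq_and_coeff_eq_iff ω h2).symm

end CostSharing
end

section
/- If f is a budget-balanced distribution rule for a welfare function W (with W(∅) = 0) on a finite player set N that guarantees the existence of a pure Nash equilibrium in all games in G(N, f, W), then for every S ⊆ N and every i ∈ S, f(i, S) = f(i, N^W(S)). -/
open scoped BigOperators Classical

/-!
Induct on `S`. If some `j ∈ S` is not a contributor, every Möbius coefficient of a coalition
`T ⊆ S` containing `j` vanishes, so `j` is a dummy: `W (insert j C) = W C` for `C ⊆ S \ {j}`.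
It then suffices that a dummy joining `B` receives nothing and changes no other share, since
`S \ {j}` has the same contributors as `S`.

This is proved by induction on `B`. By budget balance the changes
`Δ i = f i (insert j B) - f i B` sum to `-f j (insert j B)`. If that share were nonzero, some `Δ i`
would have the opposite sign; if it is zero but some `Δ i ≠ 0`, two players change in opposite
directions. Either situation yields a two-player matching-pennies game in `G(N, f, W)`, built from
a few resources on which all other players are fixed, so no pure Nash equilibrium exists.
-/

namespace CostSharing

variable {N : Type} [DecidableEq N]

theorem coeff_insert (W : Finset N → ℝ) {a : N} {T : Finset N} (ha : a ∉ T) :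
    coeff W (insert a T) = coeff (fun R => W (insert a R)) T - coeff W T := by
  have hcard := Finset.card_insert_of_notMem ha
  rw [coeff, Finset.sum_powerset_insert ha, coeff, coeff, sub_eq_neg_add,
    ← Finset.sum_neg_distrib]
  congr 1
  · refine Finset.sum_congr rfl fun R hR => ?_
    rw [hcard, Nat.sub_add_comm (Finset.card_le_card (Finset.mem_powerset.1 hR)), pow_succ]
    ring
  · refine Finset.sum_congr rfl fun R hR => ?_
    rw [hcard, Finset.card_insert_of_notMem fun h => ha (Finset.mem_powerset.1 hR h),
      Nat.add_sub_add_right]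

theorem sum_powerset_coeff (W : Finset N → ℝ) (S : Finset N) :
    ∑ T ∈ S.powerset, coeff W T = W S := by
  induction S using Finset.induction_on generalizing W with
  | empty => simp [coeff]
  | @insert a S ha ih =>
    rw [Finset.sum_powerset_insert ha, ih,
      Finset.sum_congr rfl fun T hT => coeff_insert W fun h => ha (Finset.mem_powerset.1 hT h),
      Finset.sum_sub_distrib, ih, ih]
    ring

theorem apply_insert_sub_apply (W : Finset N → ℝ) {j : N} {C : Finset N} (hj : j ∉ C) :
    W (insert j C) - W C = ∑ T ∈ C.powerset, coeff W (insert j T) := by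
  rw [← sum_powerset_coeff W (insert j C), Finset.sum_powerset_insert hj, sum_powerset_coeff]
  ring

section Contributors

variable [Fintype N] {W : Finset N → ℝ} {S : Finset N} {j : N}

theorem mem_contributors : j ∈ contributors W S ↔ ∃ T ⊆ S, coeff W T ≠ 0 ∧ j ∈ T := by
  simp only [contributors, suppIn, supp, Finset.mem_biUnion, Finset.mem_filter, Finset.mem_univ,
    true_and, id]
  grind

theorem contributors_subset : contributors W S ⊆ S := fun _ hj => by
  obtain ⟨T, hTS, -, hjT⟩ := mem_contributors.1 hj
  exact hTS hjT

theorem apply_insert_eq_of_notMem_contributors {C : Finset N} (hj : j ∉ contributors W S)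
    (hC : insert j C ⊆ S) : W (insert j C) = W C := by
  by_cases hjC : j ∈ C
  · rw [Finset.insert_eq_of_mem hjC]
  rw [← sub_eq_zero, apply_insert_sub_apply W hjC]
  refine Finset.sum_eq_zero fun T hT => not_not.1 fun hT0 => hj <| mem_contributors.2
    ⟨insert j T, (Finset.insert_subset_insert j (Finset.mem_powerset.1 hT)).trans hC, hT0,
      Finset.mem_insert_self j T⟩

theorem contributors_erase_of_notMem (hj : j ∉ contributors W S) :
    contributors W (S.erase j) = contributors W S := by
  ext i
  simp only [mem_contributors]
  constructor
  · rintro ⟨T, hTS, hT0, hiT⟩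
    exact ⟨T, hTS.trans (Finset.erase_subset j S), hT0, hiT⟩
  · rintro ⟨T, hTS, hT0, hiT⟩
    exact ⟨T, Finset.subset_erase.2 ⟨hTS, fun hjT => hj (mem_contributors.2 ⟨T, hTS, hT0, hjT⟩)⟩,
      hT0, hiT⟩

end Contributors

section BinaryGame

variable [Fintype N] {K : Type} [Fintype K] [DecidableEq K]

def copies (cnt : K → ℕ) (T : Finset K) : Finset (Σ κ : K, Fin (cnt κ)) :=
  Finset.univ.filter fun r => r.1 ∈ T

/-- `cnt κ` interchangeable resources of each type `κ`; player `p` chooses between the resource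
types `acts p false` and `acts p true`. -/
abbrev binaryGame (W : Finset N → ℝ) (cnt : K → ℕ) (acts : N → Bool → Finset K) : Game N where
  R := Σ κ : K, Fin (cnt κ)
  act p := Finset.univ.image fun b => copies cnt (acts p b)
  act_nonempty _ := Finset.univ_nonempty.image _
  Wr _ := W

def binaryPayoff (f : N → Finset N → ℝ) (cnt : K → ℕ) (acts : N → Bool → Finset K)
    (β : N → Bool) (p : N) : ℝ :=
  ∑ κ ∈ acts p (β p), cnt κ * f p (Finset.univ.filter fun q => κ ∈ acts q (β q))

theorem utility_binaryGame (W : Finset N → ℝ) (f : N → Finset N → ℝ) (cnt : K → ℕ)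
    (acts : N → Bool → Finset K) (β : N → Bool) (p : N) :
    utility (binaryGame W cnt acts) (fun _ => f) (fun q => copies cnt (acts q (β q))) p =
      binaryPayoff f cnt acts β p := by
  simp only [utility, playersAt, binaryPayoff, copies, Finset.mem_filter, Finset.mem_univ, true_and]
  rw [Finset.sum_filter, Fintype.sum_sigma]
  simp

theorem exists_binaryPayoff_equilibrium {W : Finset N → ℝ} {f : N → Finset N → ℝ}
    (hPNE : GuaranteesPNE1 W f) (cnt : K → ℕ) (acts : N → Bool → Finset K) :
    ∃ β : N → Bool, ∀ p b,
      binaryPayoff f cnt acts (Function.update β p b) p ≤ binaryPayoff f cnt acts β p := by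
  obtain ⟨a, ha_act, ha_best⟩ := hPNE (binaryGame W cnt acts) fun _ => rfl
  have : ∀ p, ∃ b, copies cnt (acts p b) = a p := fun p => by
    simpa using Finset.mem_image.1 (ha_act p)
  choose β hβ using this
  refine ⟨β, fun p b => ?_⟩
  have hdev := ha_best p _ (Finset.mem_image_of_mem _ (Finset.mem_univ b))
  have hupd : Function.update (fun q => copies cnt (acts q (β q))) p (copies cnt (acts p b)) =
      fun q => copies cnt (acts q (Function.update β p b q)) :=
    funext fun q => (Function.apply_update (fun q c => copies cnt (acts q c)) β p b q).symm
  rw [← funext hβ, hupd] at hdev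
  rwa [← utility_binaryGame W, ← utility_binaryGame W]

end BinaryGame

section PairGame

variable (x y : N) (L : Bool × Bool → Finset N)

/-- `x` chooses a row and `y` a column of `Bool × Bool`; every other player `q` is fixed on the
cells `κ` with `q ∈ L κ`. -/
def pairActs (q : N) (b : Bool) : Finset (Bool × Bool) :=
  if q = x then Finset.univ.filter (·.1 = b)
  else if q = y then Finset.univ.filter (·.2 = b)
  else Finset.univ.filter (q ∈ L ·)

def pairPayoff (f : N → Finset N → ℝ) (cnt : Bool × Bool → ℕ) (σ τ : Bool) : ℝ :=
  cnt (σ, τ) * f x (insert x (insert y (L (σ, τ)))) + cnt (σ, !τ) * f x (insert x (L (σ, !τ)))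

variable {x y L}

theorem mem_pairActs (hxy : x ≠ y) (hxL : ∀ κ, x ∉ L κ) (hyL : ∀ κ, y ∉ L κ) (β : N → Bool)
    (q : N) (κ : Bool × Bool) :
    κ ∈ pairActs x y L q (β q) ↔ (q = x ∧ κ.1 = β x) ∨ (q = y ∧ κ.2 = β y) ∨ q ∈ L κ := by
  unfold pairActs
  split_ifs with h1 h2 <;> subst_vars <;> simp [*, hxy.symm]

variable [Fintype N]

theorem binaryPayoff_pairActs_left (hxy : x ≠ y) (hxL : ∀ κ, x ∉ L κ) (hyL : ∀ κ, y ∉ L κ)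
    (f : N → Finset N → ℝ) (cnt : Bool × Bool → ℕ) (β : N → Bool) :
    binaryPayoff f cnt (pairActs x y L) β x = pairPayoff x y L f cnt (β x) (β y) := by
  have hrow : pairActs x y L x (β x) = {(β x, β y), (β x, !β y)} := by
    ext ⟨s, t⟩
    cases t <;> cases β y <;> simp [pairActs, eq_comm]
  rw [binaryPayoff, hrow, Finset.sum_pair (by simp), pairPayoff]
  congr 3 <;> ext q <;> simp [mem_pairActs hxy hxL hyL]

theorem binaryPayoff_pairActs_right (hxy : x ≠ y) (hxL : ∀ κ, x ∉ L κ) (hyL : ∀ κ, y ∉ L κ)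
    (f : N → Finset N → ℝ) (cnt : Bool × Bool → ℕ) (β : N → Bool) :
    binaryPayoff f cnt (pairActs x y L) β y =
      pairPayoff y x (L ∘ Prod.swap) f (cnt ∘ Prod.swap) (β y) (β x) := by
  have hcol : pairActs x y L y (β y) = {(β x, β y), (!β x, β y)} := by
    ext ⟨s, t⟩
    cases s <;> cases β x <;> simp [pairActs, hxy.symm, eq_comm]
  rw [binaryPayoff, hcol, Finset.sum_pair (by simp), pairPayoff]
  congr 3 <;> ext q <;> simp [mem_pairActs hxy hxL hyL, or_left_comm]

variable {W : Finset N → ℝ} {f : N → Finset N → ℝ}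

theorem exists_pairPayoff_equilibrium (hPNE : GuaranteesPNE1 W f) (hxy : x ≠ y)
    (hxL : ∀ κ, x ∉ L κ) (hyL : ∀ κ, y ∉ L κ) (cnt : Bool × Bool → ℕ) :
    ∃ σ τ : Bool, pairPayoff x y L f cnt (!σ) τ ≤ pairPayoff x y L f cnt σ τ ∧
      pairPayoff y x (L ∘ Prod.swap) f (cnt ∘ Prod.swap) (!τ) σ ≤
        pairPayoff y x (L ∘ Prod.swap) f (cnt ∘ Prod.swap) τ σ := by
  obtain ⟨β, hβ⟩ := exists_binaryPayoff_equilibrium hPNE cnt (pairActs x y L)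
  refine ⟨β x, β y, ?_, ?_⟩
  · simpa [binaryPayoff_pairActs_left hxy hxL hyL, hxy.symm] using hβ x (!β x)
  · simpa [binaryPayoff_pairActs_right hxy hxL hyL, hxy] using hβ y (!β y)

end PairGame

section Gadgets

variable [Fintype N] {W : Finset N → ℝ} {f : N → Finset N → ℝ}

/-- Resources sit only on the diagonal cells, so `i` and `j` share one exactly when their choices
match: with changes of opposite sign one of them wants to match and the other to mismatch. -/
theorem share_change_mul_share_nonneg (hPNE : GuaranteesPNE1 W f) {i j : N} {B : Finset N}
    (hi : i ∈ B) (hj : j ∉ B) (hji : f j (insert j (B.erase i)) = 0) :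
    0 ≤ (f i (insert j B) - f i B) * f j (insert j B) := by
  have hij : i ≠ j := fun h => hj (h ▸ hi)
  set L : Bool × Bool → Finset N := fun _ => B.erase i
  set cnt : Bool × Bool → ℕ := fun κ => if κ.1 = κ.2 then 1 else 0
  have hi_pay : ∀ σ τ, pairPayoff i j L f cnt σ τ = if σ = τ then f i (insert j B) else f i B := by
    intro σ τ
    cases σ <;> cases τ <;>
      simp [pairPayoff, L, cnt, Finset.insert_comm i j, Finset.insert_erase hi]
  have hj_pay : ∀ σ τ, pairPayoff j i (L ∘ Prod.swap) f (cnt ∘ Prod.swap) τ σ =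
      if σ = τ then f j (insert j B) else 0 := by
    intro σ τ
    cases σ <;> cases τ <;> simp [pairPayoff, L, cnt, Finset.insert_erase hi, hji]
  obtain ⟨σ, τ, hi_best, hj_best⟩ := exists_pairPayoff_equilibrium hPNE hij
    (fun _ => Finset.notMem_erase i B) (fun _ h => hj (Finset.mem_of_mem_erase h)) cnt
  rw [hi_pay, hi_pay] at hi_best
  rw [hj_pay, hj_pay] at hj_best
  cases σ <;> cases τ <;> simp at hi_best hj_best <;> nlinarith

/-- One resource per cell, with `j` present exactly on the diagonal: `x` gains by matching `y`,
while `y` would gain by mismatching if its share dropped when `j` joins. -/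
theorem share_insert_le_of_lt (hPNE : GuaranteesPNE1 W f) {x y j : N} {B : Finset N}
    (hx : x ∈ B) (hy : y ∈ B) (hxy : x ≠ y) (hj : j ∉ B)
    (hx_stable : f x (insert j (B.erase y)) = f x (B.erase y))
    (hy_stable : f y (insert j (B.erase x)) = f y (B.erase x))
    (hx_gain : f x B < f x (insert j B)) : f y B ≤ f y (insert j B) := by
  set E := (B.erase x).erase y
  have hxE : insert x E = B.erase y := by
    rw [show E = (B.erase y).erase x from Finset.erase_right_comm,
      Finset.insert_erase (Finset.mem_erase.2 ⟨hxy, hx⟩)]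
  have hyE : insert y E = B.erase x := Finset.insert_erase (Finset.mem_erase.2 ⟨hxy.symm, hy⟩)
  have hxyE : insert x (insert y E) = B := by rw [hyE, Finset.insert_erase hx]
  have hyxE : insert y (insert x E) = B := by rw [hxE, Finset.insert_erase hy]
  set L : Bool × Bool → Finset N := fun κ => if κ.1 = κ.2 then insert j E else E
  set cnt : Bool × Bool → ℕ := fun _ => 1
  have hx_pay : ∀ σ τ, pairPayoff x y L f cnt σ τ =
      (if σ = τ then f x (insert j B) else f x B) + f x (B.erase y) := by
    intro σ τ
    cases σ <;> cases τ <;>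
      simp [pairPayoff, L, cnt, Finset.insert_comm _ j, hxE, hxyE, hx_stable, add_comm]
  have hy_pay : ∀ σ τ, pairPayoff y x (L ∘ Prod.swap) f (cnt ∘ Prod.swap) τ σ =
      (if σ = τ then f y (insert j B) else f y B) + f y (B.erase x) := by
    intro σ τ
    cases σ <;> cases τ <;>
      simp [pairPayoff, L, cnt, Finset.insert_comm _ j, hyE, hyxE, hy_stable, add_comm]
  obtain ⟨σ, τ, hx_best, hy_best⟩ := exists_pairPayoff_equilibrium hPNE hxy
    (L := L) (fun κ => by grind) (fun κ => by grind) cnt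
  rw [hx_pay, hx_pay] at hx_best
  rw [hy_pay, hy_pay] at hy_best
  cases σ <;> cases τ <;> simp at hx_best hy_best <;> linarith

end Gadgets

theorem shares_insert_of_dummy [Fintype N] {W : Finset N → ℝ} {f : N → Finset N → ℝ}
    (hbb : BudgetBalanced W f) (hPNE : GuaranteesPNE1 W f) {j : N} {B : Finset N} (hj : j ∉ B)
    (hdummy : ∀ C ⊆ B, W (insert j C) = W C) :
    f j (insert j B) = 0 ∧ ∀ i ∈ B, f i (insert j B) = f i B := by
  induction B using Finset.strongInduction with
  | _ B ih =>
  have ih' : ∀ k ∈ B, f j (insert j (B.erase k)) = 0 ∧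
      ∀ i ∈ B.erase k, f i (insert j (B.erase k)) = f i (B.erase k) :=
    fun k hk => ih _ (Finset.erase_ssubset hk) (fun h => hj (Finset.mem_of_mem_erase h))
      fun C hC => hdummy C (hC.trans (Finset.erase_subset k B))
  have hsum : ∑ i ∈ B, (f i (insert j B) - f i B) = -f j (insert j B) := by
    have := hbb (insert j B)
    rw [Finset.sum_insert hj, hdummy B subset_rfl, ← hbb B] at this
    rw [Finset.sum_sub_distrib]
    linarith
  have hzero : f j (insert j B) = 0 := by
    have hnonneg : 0 ≤ ∑ i ∈ B, (f i (insert j B) - f i B) * f j (insert j B) :=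
      Finset.sum_nonneg fun i hi => share_change_mul_share_nonneg hPNE hi hj (ih' i hi).1
    rw [← Finset.sum_mul, hsum] at hnonneg
    nlinarith
  refine ⟨hzero, fun i hi => by_contra fun hne => ?_⟩
  rw [hzero, neg_zero] at hsum
  obtain ⟨x, hx, hx_gain⟩ := Finset.exists_pos_of_sum_zero_of_exists_nonzero _ hsum
    ⟨i, hi, sub_ne_zero.2 hne⟩
  obtain ⟨y, hy, hy_loss⟩ := Finset.exists_pos_of_sum_zero_of_exists_nonzero
    (fun i => -(f i (insert j B) - f i B)) (by rw [Finset.sum_neg_distrib, hsum, neg_zero])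
    ⟨x, hx, by linarith⟩
  have hxy : x ≠ y := by rintro rfl; linarith
  have := share_insert_le_of_lt hPNE hx hy hxy hj
    ((ih' y hy).2 x (Finset.mem_erase.2 ⟨hxy, hx⟩))
    ((ih' x hx).2 y (Finset.mem_erase.2 ⟨hxy.symm, hy⟩)) (by linarith)
  linarith

theorem distributes_as_contributors_general (N : Type) [Fintype N] [DecidableEq N]
    (W : Finset N → ℝ) (f : N → Finset N → ℝ)
    (hdist : DistRule f) (hbb : BudgetBalanced W f)
    (hPNE : GuaranteesPNE1 W f) :
    ∀ S : Finset N, ∀ i ∈ S, f i S = f i (contributors W S) := by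
  intro S
  induction S using Finset.strongInduction with
  | _ S ih =>
  intro i hi
  by_cases hS : S ⊆ contributors W S
  · rw [contributors_subset.antisymm hS]
  obtain ⟨j, hjS, hjC⟩ := Finset.not_subset.1 hS
  obtain ⟨hj_share, hshares⟩ := shares_insert_of_dummy hbb hPNE (Finset.notMem_erase j S)
    fun C hC => apply_insert_eq_of_notMem_contributors hjC
      (Finset.insert_subset hjS (hC.trans (Finset.erase_subset j S)))
  rw [Finset.insert_erase hjS] at hj_share hshares
  rcases eq_or_ne i j with rfl | hij
  · rw [hj_share, hdist i _ hjC]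
  · have hiB : i ∈ S.erase j := Finset.mem_erase.2 ⟨hij, hi⟩
    rw [hshares i hiB, ih _ (Finset.erase_ssubset hjS) i hiB, contributors_erase_of_notMem hjC]

/-- **Proposition (three necessary conditions combined).** A budget-balanced
distribution rule `f` for `W` that guarantees a pure Nash equilibrium in all
games in `G(N, f, W)` satisfies `f(i,S) = f(i, N^W(S))` for all `S ⊆ N`, `i ∈ S`. -/
theorem distributes_as_contributors (N : Type) [Fintype N] [DecidableEq N]
    (hN : 1 < Fintype.card N)
    (W : Finset N → ℝ) (f : N → Finset N → ℝ)
    (hW0 : W ∅ = 0) (hdist : DistRule f) (hbb : BudgetBalanced W f)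
    (hPNE : GuaranteesPNE1 W f) :
    ∀ S : Finset N, ∀ i ∈ S, f i S = f i (contributors W S) :=
  distributes_as_contributors_general N W f hdist hbb hPNE

end CostSharing
end

section
/- If f is a budget-balanced distribution rule for a welfare function W (with W(∅) = 0) on a finite player set N that guarantees the existence of a pure Nash equilibrium in all games in G(N, f, W), then for every S ⊆ N with 𝒯^W(S) = ∅ and every i ∈ S, f(i, S) = 0. -/
open scoped BigOperators Classical

namespace CostSharing

variable {N : Type} [Fintype N] [DecidableEq N]

lemma W_vanishes {N : Type} [Fintype N] [DecidableEq N] (W : Finset N → ℝ)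
    (S : Finset N) (h : ∀ T ⊆ S, coeff W T = 0) :
    ∀ S' ⊆ S, W S' = 0 := by
  intro S'
  induction S' using Finset.strongInduction with
  | _ S' ih =>
    intro hS'
    have h0 := h S' hS'
    unfold coeff at h0
    rw [Finset.sum_eq_single S'] at h0
    · simpa using h0
    · intro R hR hne
      have hss : R ⊂ S' :=
        Finset.ssubset_iff_subset_ne.mpr ⟨Finset.mem_powerset.mp hR, hne⟩
      rw [ih R hss (hss.subset.trans hS')]; ring
    · intro hns; exact absurd (Finset.mem_powerset_self S') hns

/-- **Lemma 1.** A budget-balanced distribution rule `f` for `W` that guarantees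
a pure Nash equilibrium in all games in `G(N, f, W)` allocates nothing on
subsets `S` containing no contributing coalition (`𝒯^W(S) = ∅`). -/
theorem zero_on_noncontributing_sets (N : Type) [Fintype N] [DecidableEq N]
    (hN : 1 < Fintype.card N)
    (W : Finset N → ℝ) (f : N → Finset N → ℝ)
    (hW0 : W ∅ = 0) (hdist : DistRule f) (hbb : BudgetBalanced W f)
    (hPNE : GuaranteesPNE1 W f) :
    ∀ S : Finset N, suppIn W S = ∅ → ∀ i ∈ S, f i S = 0 := by
  intro S hsupp i hiS
  by_contra hne
  have hc : ∀ T ⊆ S, coeff W T = 0 := by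
    intro T hT
    by_contra h
    have hTmem : T ∈ suppIn W S := by
      simp only [suppIn, supp, Finset.mem_filter, Finset.mem_univ, true_and]
      exact ⟨h, hT⟩
    rw [hsupp] at hTmem
    exact absurd hTmem (Finset.notMem_empty T)
  have hWz : ∀ S' ⊆ S, W S' = 0 := W_vanishes W S hc
  set 𝒮 : Finset (Finset N) := S.powerset.filter (fun S' => ∃ j, f j S' ≠ 0)
    with h𝒮
  have hSmem : S ∈ 𝒮 := by
    rw [h𝒮, Finset.mem_filter]
    exact ⟨Finset.mem_powerset_self S, ⟨i, hne⟩⟩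
  obtain ⟨S'', hS''mem, hmin⟩ := Finset.exists_min_image 𝒮 Finset.card ⟨S, hSmem⟩
  rw [h𝒮, Finset.mem_filter] at hS''mem
  have hS''S : S'' ⊆ S := Finset.mem_powerset.mp hS''mem.1
  obtain ⟨i1, hi1⟩ := hS''mem.2
  have hzero : ∀ S3 ⊆ S, S3.card < S''.card → ∀ j, f j S3 = 0 := by
    intro S3 h3 hlt j
    by_contra hj
    have h3m : S3 ∈ 𝒮 := by
      rw [h𝒮, Finset.mem_filter]
      exact ⟨Finset.mem_powerset.mpr h3, ⟨j, hj⟩⟩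
    exact absurd (hmin S3 h3m) (not_le.mpr hlt)
  have hsum : ∑ j ∈ S'', f j S'' = 0 := by rw [hbb S'']; exact hWz S'' hS''S
  have hmemf : ∀ j, f j S'' ≠ 0 → j ∈ S'' := by
    intro j hj
    by_contra h
    exact hj (hdist j S'' h)
  have hi1m : i1 ∈ S'' := hmemf i1 hi1
  have hpos : ∃ i0, 0 < f i0 S'' := by
    by_contra h
    push_neg at h
    have h1 : f i1 S'' < 0 := lt_of_le_of_ne (h i1) hi1
    have hlt : ∑ j ∈ S'', f j S'' < ∑ j ∈ S'', (0 : ℝ) :=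
      Finset.sum_lt_sum (fun j _ => h j) ⟨i1, hi1m, h1⟩
    simp [hsum] at hlt
  have hneg : ∃ j0, f j0 S'' < 0 := by
    obtain ⟨i0, hi0⟩ := hpos
    by_contra h
    push_neg at h
    have hlt : ∑ j ∈ S'', (0 : ℝ) < ∑ j ∈ S'', f j S'' :=
      Finset.sum_lt_sum (fun j _ => h j) ⟨i0, hmemf i0 (ne_of_gt hi0), hi0⟩
    simp [hsum] at hlt
  obtain ⟨i0, hi0pos⟩ := hpos
  obtain ⟨j0, hj0neg⟩ := hneg
  have hi0S : i0 ∈ S'' := hmemf i0 (ne_of_gt hi0pos)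
  have hj0S : j0 ∈ S'' := hmemf j0 (ne_of_lt hj0neg)
  have hij : i0 ≠ j0 := by
    intro h; rw [h] at hi0pos; linarith
  -- Build the game on two resources (Bool).
  set A : N → Finset (Finset Bool) := fun k =>
    if k = i0 ∨ k = j0 then {({false} : Finset Bool), {true}}
    else if k ∈ S'' then {({false, true} : Finset Bool)}
    else {(∅ : Finset Bool)} with hA
  have hANE : ∀ k, (A k).Nonempty := by
    intro k; rw [hA]; dsimp only; split_ifs <;> simp
  have hAval : ∀ k, A k =
      if k = i0 ∨ k = j0 then {({false} : Finset Bool), {true}}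
      else if k ∈ S'' then {({false, true} : Finset Bool)}
      else {(∅ : Finset Bool)} := fun k => rfl
  obtain ⟨a, haAct, haNE⟩ := hPNE
    { R := Bool, act := A, act_nonempty := hANE, Wr := fun _ => W } (fun _ => rfl)
  have hu : ∀ (p : N → Finset Bool) (k : N),
      utility { R := Bool, act := A, act_nonempty := hANE, Wr := fun _ => W }
        (fun _ => f) p k = ∑ r ∈ p k, f k (playersAt (G := { R := Bool, act := A, act_nonempty := hANE, Wr := fun _ => W }) p r) := by
    intro p k; rfl
  have hmemP : ∀ (p : N → Finset Bool) (k : N) (r : Bool),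
      k ∈ playersAt (G := { R := Bool, act := A, act_nonempty := hANE, Wr := fun _ => W }) p r ↔ r ∈ p k := by
    intro p k r
    simp [playersAt]
  have haiA : a i0 ∈ ({({false} : Finset Bool), {true}} : Finset (Finset Bool)) := by
    have h : a i0 ∈ A i0 := haAct i0
    rwa [hAval i0, if_pos (Or.inl rfl)] at h
  have hajA : a j0 ∈ ({({false} : Finset Bool), {true}} : Finset (Finset Bool)) := by
    have h : a j0 ∈ A j0 := haAct j0
    rwa [hAval j0, if_pos (Or.inr rfl)] at h
  obtain ⟨bi, hbi⟩ : ∃ b : Bool, a i0 = {b} := by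
    rcases Finset.mem_insert.mp haiA with h | h
    · exact ⟨false, h⟩
    · exact ⟨true, Finset.mem_singleton.mp h⟩
  obtain ⟨bj, hbj⟩ : ∃ b : Bool, a j0 = {b} := by
    rcases Finset.mem_insert.mp hajA with h | h
    · exact ⟨false, h⟩
    · exact ⟨true, Finset.mem_singleton.mp h⟩
  have hoth : ∀ k, k ∈ S'' → k ≠ i0 → k ≠ j0 → a k = {false, true} := by
    intro k hk hki hkj
    have h : a k ∈ A k := haAct k
    rw [hAval k, if_neg (by tauto), if_pos hk] at h
    exact Finset.mem_singleton.mp h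
  have hout : ∀ k, k ∉ S'' → a k = ∅ := by
    intro k hk
    have hki : k ≠ i0 := fun h => hk (h ▸ hi0S)
    have hkj : k ≠ j0 := fun h => hk (h ▸ hj0S)
    have h : a k ∈ A k := haAct k
    rw [hAval k, if_neg (by tauto), if_neg hk] at h
    exact Finset.mem_singleton.mp h
  by_cases hcase : bi = bj
  · -- i0 and j0 on the same resource: j0 deviates to the other one
    have hPa : playersAt (G := { R := Bool, act := A, act_nonempty := hANE, Wr := fun _ => W }) a bj = S'' := by
      ext k
      rw [hmemP]
      constructor
      · intro hk
        by_contra hks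
        rw [hout k hks] at hk
        exact absurd hk (Finset.notMem_empty _)
      · intro hk
        by_cases h1 : k = i0
        · rw [h1, hbi, hcase]; exact Finset.mem_singleton_self _
        by_cases h2 : k = j0
        · rw [h2, hbj]; exact Finset.mem_singleton_self _
        · rw [hoth k hk h1 h2]; cases bj <;> simp
    have hdev : ({(!bj)} : Finset Bool) ∈ A j0 := by
      rw [hAval j0, if_pos (Or.inr rfl)]; cases bj <;> simp
    have hkey := haNE j0 _ hdev
    rw [hu, hu] at hkey
    rw [hbj, Finset.sum_singleton, hPa] at hkey
    rw [Function.update_self, Finset.sum_singleton] at hkey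
    have hP' : playersAt (G := { R := Bool, act := A, act_nonempty := hANE, Wr := fun _ => W })
        (Function.update a j0 {(!bj)}) (!bj) = S''.erase i0 := by
      ext k
      rw [hmemP, Finset.mem_erase]
      by_cases h2 : k = j0
      · subst h2
        rw [Function.update_self]
        simp [hj0S, Ne.symm hij]
      rw [Function.update_of_ne h2]
      by_cases h1 : k = i0
      · subst h1
        rw [hbi, hcase]
        simp
      by_cases hks : k ∈ S''
      · rw [hoth k hks h1 h2]
        simp [h1, hks]
      · rw [hout k hks]
        simp [hks]
    rw [hP'] at hkey
    have hz : f j0 (S''.erase i0) = 0 :=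
      hzero _ ((Finset.erase_subset _ _).trans hS''S)
        (Finset.card_erase_lt_of_mem hi0S) j0
    rw [hz] at hkey
    linarith
  · -- i0 and j0 on different resources: i0 deviates to j0's resource
    have hPa : playersAt (G := { R := Bool, act := A, act_nonempty := hANE, Wr := fun _ => W }) a bi = S''.erase j0 := by
      ext k
      rw [hmemP, Finset.mem_erase]
      by_cases h1 : k = i0
      · subst h1
        rw [hbi]
        simp [hij, hi0S]
      by_cases h2 : k = j0
      · subst h2
        rw [hbj]
        simp [hcase]
      by_cases hks : k ∈ S''
      · rw [hoth k hks h1 h2]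
        simp [h2, hks]
      · rw [hout k hks]
        simp [hks]
    have hdev : ({bj} : Finset Bool) ∈ A i0 := by
      rw [hAval i0, if_pos (Or.inl rfl)]; cases bj <;> simp
    have hkey := haNE i0 _ hdev
    rw [hu, hu] at hkey
    rw [hbi, Finset.sum_singleton, hPa] at hkey
    rw [Function.update_self, Finset.sum_singleton] at hkey
    have hP' : playersAt (G := { R := Bool, act := A, act_nonempty := hANE, Wr := fun _ => W })
        (Function.update a i0 {bj}) bj = S'' := by
      ext k
      rw [hmemP]
      by_cases h1 : k = i0
      · subst h1
        rw [Function.update_self]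
        simp [hi0S]
      rw [Function.update_of_ne h1]
      by_cases h2 : k = j0
      · subst h2
        rw [hbj]
        simp [hj0S]
      by_cases hks : k ∈ S''
      · rw [hoth k hks h1 h2]
        cases bj <;> simp [hks]
      · rw [hout k hks]
        simp [hks]
    rw [hP'] at hkey
    have hz : f i0 (S''.erase j0) = 0 :=
      hzero _ ((Finset.erase_subset _ _).trans hS''S)
        (Finset.card_erase_lt_of_mem hj0S) i0
    rw [hz] at hkey
    linarith

end CostSharing
end

section
/- For any distribution rule f for a welfare function W = (𝒯, Q) (with W(∅) = 0), the recursively defined basis distribution rules {f^T}_{T∈𝒯} satisfy: for all S ⊆ N and all i ∈ N, f^T(i, S) = f^T(i, T) if i ∈ T and T ⊆ S, and f^T(i, S) = 0 otherwise. -/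
open scoped BigOperators Classical

namespace CostSharing

variable {N : Type} [Fintype N] [DecidableEq N]

/-- **Lemma 4.0.** For any distribution rule `f` for `W = (𝒯, Q)`, the
recursively defined basis distribution rules satisfy
`f^T(i,S) = f^T(i,T)` if `i ∈ T ∧ T ⊆ S`, and `f^T(i,S) = 0` otherwise. -/
theorem basisRule_local (N : Type) [Fintype N] [DecidableEq N]
    (W : Finset N → ℝ) (f : N → Finset N → ℝ)
    (hW0 : W ∅ = 0) (hdist : DistRule f) :
    ∀ T ∈ supp W, ∀ (i : N) (S : Finset N),
      basisRule W f T i S =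
        if i ∈ T ∧ T ⊆ S then basisRule W f T i T else 0 := by
  intro T
  induction T using Finset.strongInduction with
  | _ T ih =>
    intro hT i S
    by_cases hTS : T ⊆ S
    · have key : ∀ (T' : Finset N), T' ∈ (suppIn W T).erase T →
          T' ⊂ T ∧ T' ∈ supp W ∧ T' ⊆ T := by
        intro T' h
        simp only [Finset.mem_erase, suppIn, Finset.mem_filter] at h
        exact ⟨Finset.ssubset_iff_subset_ne.mpr ⟨h.2.2, h.1⟩, h.2.1, h.2.2⟩
      by_cases hiT : i ∈ T
      · rw [if_pos ⟨hiT, hTS⟩]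
        rw [basisRule, basisRule, if_pos hTS, if_pos (Finset.Subset.refl T)]
        congr 2
        apply Finset.sum_congr rfl
        intro T' _
        obtain ⟨hss, hsupp, hsub⟩ := key T'.1 T'.2
        rw [ih T'.1 hss hsupp i S, ih T'.1 hss hsupp i T]
        by_cases hi' : i ∈ T'.1
        · simp [hi', hsub, hsub.trans hTS]
        · simp [hi']
      · rw [if_neg (by tauto)]
        rw [basisRule, if_pos hTS, hdist i T hiT]
        have hsum : ∀ T' ∈ ((suppIn W T).erase T).attach,
            coeff W T'.1 * basisRule W f T'.1 i S = 0 := by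
          intro T' _
          obtain ⟨hss, hsupp, hsub⟩ := key T'.1 T'.2
          rw [ih T'.1 hss hsupp i S, if_neg (by intro h; exact hiT (hsub h.1))]
          ring
        rw [Finset.sum_eq_zero hsum]
        ring
    · rw [if_neg (by tauto), basisRule, if_neg hTS]


end CostSharing
end
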